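/- The pointwise limit of the iterated-renormalization sequence of coherent weight functions exists and is itself a coherent weight function with h(root) = 1, and it assigns weight 0 exactly to the vertices that are eventually unsupported. -/

import Mathlib

/-- An abstract rooted tree: every vertex has a parent (the root is its own
parent), a depth (distance to the root), every vertex is connected to the
root, and each depth level is finite (finitely-branching). -/
structure RTree (V : Type) where
  root : V
  parent : V → V
  depth : V → ℕ
  parent_root : parent root = root
  depth_root : depth root = 0
  depth_parent : ∀ v : V, v ≠ root → depth (parent v) + 1 = depth v
  ancestor_root : ∀ v : V, parent^[depth v] v = root
  level_finite : ∀ d : ℕ, {v : V | depth v = d}.Finite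

namespace RTree

variable {V : Type}

/-- The children of a vertex. -/
def children (T : RTree V) (v : V) : Set V :=
  {u : V | T.parent u = v ∧ u ≠ T.root}

/-- The descendants of `v` that lie `e` levels below `v`. -/
def descAt (T : RTree V) (e : ℕ) (v : V) : Set V :=
  {u : V | T.parent^[e] u = v ∧ T.depth u = T.depth v + e}

end RTree

/-- A coherent weight function (a Hintikka tree): the root gets weight 1 and
the weight of each vertex is the sum of the weights of its children. -/
def Coherent {V : Type} (T : RTree V) (h : V → ℝ) : Prop :=
  h T.root = 1 ∧ ∀ v : V, h v = ∑ᶠ u ∈ T.children v, h u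
open scoped Classical

/-- `u` is an ancestor of (or equal to) `v`. -/
def AncOrEq {V : Type} (T : RTree V) (u v : V) : Prop :=
  ∃ k : ℕ, T.parent^[k] v = u ∧ T.depth v = T.depth u + k

/-- `u` is a proper descendant of `ρ`. -/
def ProperDesc {V : Type} (T : RTree V) (ρ u : V) : Prop :=
  ∃ j : ℕ, 0 < j ∧ T.parent^[j] u = ρ ∧ T.depth u = T.depth ρ + j

/-- `u` is supported (relative to weights `h`, target depth `D`, and the
refuted depth-`D` vertex `w`): there is a chain from `u` down to some
depth-`D` vertex `v ≠ w` along which `h` is positive (for vertices deeper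
than `D`, we require the ancestor at depth `D` to avoid `w` and to carry
positive weight). -/
def Supported {V : Type} (T : RTree V) (h : V → ℝ) (D : ℕ) (w : V) (u : V) : Prop :=
  if T.depth u ≤ D then
    ∃ v : V, T.depth v = D ∧ v ≠ w ∧ T.parent^[D - T.depth u] v = u ∧
      ∀ k : ℕ, k ≤ D - T.depth u → 0 < h (T.parent^[k] v)
  else
    T.parent^[T.depth u - D] u ≠ w ∧ 0 < h (T.parent^[T.depth u - D] u)

/-- The total renormalization constant: sum of `h` over the children of `ρ`. -/
noncomputable def Ztot {V : Type} (T : RTree V) (h : V → ℝ) (ρ : V) : ℝ :=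
  ∑ᶠ u ∈ T.children ρ, h u

/-- The positive renormalization constant: sum of `h` over the supported
children of `ρ`. -/
noncomputable def Zplus {V : Type} (T : RTree V) (h : V → ℝ) (D : ℕ) (w ρ : V) : ℝ :=
  ∑ᶠ u ∈ T.children ρ ∩ {u : V | Supported T h D w u}, h u

/-- Renormalization of `h` refuting the depth-`D` vertex `w`, with
redistribution point `ρ`: zero the unsupported descendants of `ρ`, rescale
the supported descendants of `ρ` by `Z/Z⁺`, and leave everything else
unchanged. -/
noncomputable def renorm {V : Type} (T : RTree V) (h : V → ℝ) (D : ℕ) (w ρ : V) : V → ℝ :=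
  fun u =>
    if ProperDesc T ρ u then
      if Supported T h D w u then (Ztot T h ρ / Zplus T h D w ρ) * h u else 0
    else h u

/-- `ρ` is the redistribution point for refuting the depth-`D` vertex `w`:
it is the deepest ancestor of `w` having a supported child. -/
def IsRedistPoint {V : Type} (T : RTree V) (h : V → ℝ) (D : ℕ) (w ρ : V) : Prop :=
  AncOrEq T ρ w ∧ (∃ c ∈ T.children ρ, Supported T h D w c) ∧
    ∀ u : V, AncOrEq T u w → T.depth ρ < T.depth u →
      ∀ c ∈ T.children u, ¬ Supported T h D w c

/-!
Each renormalization step either sets the weight of a vertex to `0` or multiplies it by a factor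
`Z / Z⁺ ≥ 1`, so along the sequence the weight of a fixed vertex is nondecreasing until it vanishes,
after which it stays `0`. Coherence bounds every weight by the root weight `1`, so each of these
sequences converges, with limit `0` exactly when it eventually vanishes. Coherence passes to the
limit because each vertex has only finitely many children, and a vertex has weight `0` exactly when
all its descendants at some level do.
-/

open Filter Topology

section Sequence

variable {a : ℕ → ℝ}

lemma eq_zero_of_le_of_eq_zero_or_exists_eq_mul
    (hstep : ∀ n, a (n + 1) = 0 ∨ ∃ c, 1 ≤ c ∧ a (n + 1) = c * a n)
    {n m : ℕ} (hnm : n ≤ m) (hn : a n = 0) : a m = 0 := by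
  induction m, hnm using Nat.le_induction with
  | base => exact hn
  | succ m _ ih =>
    rcases hstep m with h | ⟨c, -, h⟩
    · exact h
    · rw [h, ih, mul_zero]

lemma exists_tendsto_of_eq_zero_or_exists_eq_mul (hnn : ∀ n, 0 ≤ a n)
    (hbdd : BddAbove (Set.range a))
    (hstep : ∀ n, a (n + 1) = 0 ∨ ∃ c, 1 ≤ c ∧ a (n + 1) = c * a n) :
    ∃ L, Tendsto a atTop (𝓝 L) ∧ (L = 0 ↔ ∃ n, a n = 0) := by
  by_cases hz : ∃ n, a n = 0
  · obtain ⟨n, hn⟩ := hz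
    refine ⟨0, tendsto_const_nhds.congr' ?_, iff_of_true rfl ⟨n, hn⟩⟩
    filter_upwards [eventually_ge_atTop n] with m hm
    exact (eq_zero_of_le_of_eq_zero_or_exists_eq_mul hstep hm hn).symm
  · simp only [not_exists] at hz
    have hpos : ∀ n, 0 < a n := fun n => (hnn n).lt_of_ne (Ne.symm (hz n))
    have hmono : Monotone a := by
      refine monotone_nat_of_le_succ fun n => ?_
      rcases hstep n with h | ⟨c, hc, h⟩
      · exact absurd h (hz _)
      · rw [h]
        exact le_mul_of_one_le_left (hnn n) hc
    have hL : 0 < ⨆ n, a n := (hpos 0).trans_le (le_ciSup hbdd 0)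
    exact ⟨⨆ n, a n, tendsto_atTop_ciSup hmono hbdd, iff_of_false hL.ne' (by simpa using hz)⟩

end Sequence

namespace RTree

variable {V : Type} (T : RTree V)

lemma depth_of_mem_children {v u : V} (hu : u ∈ T.children v) : T.depth u = T.depth v + 1 := by
  have := T.depth_parent u hu.2
  rw [hu.1] at this
  omega

lemma children_finite (v : V) : (T.children v).Finite :=
  (T.level_finite (T.depth v + 1)).subset fun _ hu => T.depth_of_mem_children hu

lemma mem_descAt_succ {e : ℕ} {v u c : V} (hu : u ∈ T.descAt e v) (hc : c ∈ T.children u) :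
    c ∈ T.descAt (e + 1) v := by
  refine ⟨?_, ?_⟩
  · rw [Function.iterate_succ_apply, hc.1, hu.1]
  · rw [T.depth_of_mem_children hc, hu.2, add_assoc]

end RTree

namespace Coherent

variable {V : Type} {T : RTree V} {h : V → ℝ}

lemma apply_eq_sum (hh : Coherent T h) (v : V) :
    h v = ∑ u ∈ (T.children_finite v).toFinset, h u := by
  rw [hh.2 v, finsum_mem_eq_finite_toFinset_sum _ (T.children_finite v)]

lemma le_parent (hh : Coherent T h) (hnn : ∀ v, 0 ≤ h v) {v : V} (hv : v ≠ T.root) :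
    h v ≤ h (T.parent v) := by
  rw [hh.apply_eq_sum (T.parent v)]
  exact Finset.single_le_sum (fun u _ => hnn u) ((T.children_finite _).mem_toFinset.2 ⟨rfl, hv⟩)

lemma le_iterate_parent (hh : Coherent T h) (hnn : ∀ v, 0 ≤ h v) (v : V) (k : ℕ) :
    h v ≤ h (T.parent^[k] v) := by
  induction k with
  | zero => rfl
  | succ k ih =>
    rw [Function.iterate_succ_apply']
    by_cases hk : T.parent^[k] v = T.root
    · rwa [hk, T.parent_root, ← hk]
    · exact ih.trans (hh.le_parent hnn hk)

lemma le_one (hh : Coherent T h) (hnn : ∀ v, 0 ≤ h v) (v : V) : h v ≤ 1 := by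
  simpa [T.ancestor_root, hh.1] using hh.le_iterate_parent hnn v (T.depth v)

lemma eq_zero_iff_exists_descAt (hh : Coherent T h) (v : V) :
    h v = 0 ↔ ∃ e, ∀ u ∈ T.descAt e v, h u = 0 := by
  refine ⟨fun hv => ⟨0, fun u hu => (show u = v from hu.1) ▸ hv⟩, ?_⟩
  rintro ⟨e, he⟩
  induction e generalizing v with
  | zero => exact he v ⟨rfl, rfl⟩
  | succ e ih =>
    refine ih v fun u hu => ?_
    rw [hh.2 u]
    exact finsum_mem_eq_zero_of_forall_eq_zero fun c hc => he c (T.mem_descAt_succ hu hc)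

lemma of_tendsto {ι : Type*} {l : Filter ι} [l.NeBot] {H : ι → V → ℝ} {Hlim : V → ℝ}
    (hcoh : ∀ i, Coherent T (H i)) (hlim : ∀ v, Tendsto (fun i => H i v) l (𝓝 (Hlim v))) :
    Coherent T Hlim := by
  refine ⟨tendsto_nhds_unique (hlim T.root) ?_, fun v => ?_⟩
  · simp only [fun i => (hcoh i).1, tendsto_const_nhds]
  · have hsum : Tendsto (fun i => ∑ u ∈ (T.children_finite v).toFinset, H i u) l
        (𝓝 (∑ u ∈ (T.children_finite v).toFinset, Hlim u)) :=
      tendsto_finsetSum _ fun u _ => hlim u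
    simp only [← fun i => (hcoh i).apply_eq_sum v] at hsum
    rw [tendsto_nhds_unique (hlim v) hsum,
      finsum_mem_eq_finite_toFinset_sum _ (T.children_finite v)]

end Coherent

section Renorm

variable {V : Type} {T : RTree V} {h : V → ℝ} {D : ℕ} {w ρ : V}

lemma Zplus_le_Ztot (hnn : ∀ v, 0 ≤ h v) : Zplus T h D w ρ ≤ Ztot T h ρ := by
  have hfin := (T.children_finite ρ).subset (Set.inter_subset_left (t := {u | Supported T h D w u}))
  rw [Zplus, Ztot, finsum_mem_eq_finite_toFinset_sum _ hfin,
    finsum_mem_eq_finite_toFinset_sum _ (T.children_finite ρ)]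
  exact Finset.sum_le_sum_of_subset_of_nonneg
    (Set.Finite.toFinset_subset_toFinset.2 Set.inter_subset_left) fun u _ _ => hnn u

lemma renorm_eq_zero_or_exists_eq_mul (hnn : ∀ v, 0 ≤ h v) (hZ : 0 < Zplus T h D w ρ) (v : V) :
    renorm T h D w ρ v = 0 ∨ ∃ c, 1 ≤ c ∧ renorm T h D w ρ v = c * h v := by
  unfold renorm
  split_ifs
  · exact Or.inr ⟨_, (one_le_div hZ).2 (Zplus_le_Ztot hnn), rfl⟩
  · exact Or.inl rfl
  · exact Or.inr ⟨1, le_rfl, (one_mul _).symm⟩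

end Renorm

/-- The pointwise limit of the iterated-renormalization sequence of coherent
weight functions exists and is itself a coherent weight function (in
particular assigning 1 to the root), and it assigns weight 0 exactly to the
vertices that are eventually unsupported. -/
theorem stmt9 {V : Type} (T : RTree V) (H : ℕ → V → ℝ)
    (hcoh : ∀ n : ℕ, Coherent T (H n)) (hnn : ∀ (n : ℕ) (v : V), 0 ≤ H n v)
    (hstep : ∀ n : ℕ, H (n + 1) = H n ∨
      ∃ (D : ℕ) (w ρ : V), T.depth w = D ∧ IsRedistPoint T (H n) D w ρ ∧
        0 < Zplus T (H n) D w ρ ∧ H (n + 1) = renorm T (H n) D w ρ) :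
    ∃ Hlim : V → ℝ,
      (∀ v : V, Filter.Tendsto (fun n : ℕ => H n v) Filter.atTop (nhds (Hlim v))) ∧
      Coherent T Hlim ∧
      ∀ v : V, (Hlim v = 0 ↔ ∃ E e : ℕ, ∀ u ∈ T.descAt e v, H E u = 0) := by
  have hbdd (v : V) : BddAbove (Set.range fun n => H n v) :=
    ⟨1, Set.forall_mem_range.2 fun n => (hcoh n).le_one (hnn n) v⟩
  have hgrow (n : ℕ) (v : V) : H (n + 1) v = 0 ∨ ∃ c, 1 ≤ c ∧ H (n + 1) v = c * H n v := by
    rcases hstep n with h | ⟨D, w, ρ, -, -, hZ, h⟩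
    · exact Or.inr ⟨1, le_rfl, by rw [h, one_mul]⟩
    · rw [h]
      exact renorm_eq_zero_or_exists_eq_mul (hnn n) hZ v
  choose Hlim htend hzero using fun v =>
    exists_tendsto_of_eq_zero_or_exists_eq_mul (hnn · v) (hbdd v) (hgrow · v)
  refine ⟨Hlim, htend, Coherent.of_tendsto hcoh htend, fun v => ?_⟩
  rw [hzero v]
  exact exists_congr fun n => (hcoh n).eq_zero_iff_exists_descAt v
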